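/- For every global type G, the structure ES(G) = (E(G), ≤_G, #_G) is a Prime Event Structure: ≤_G is a partial order, #_G is irreflexive and symmetric, and conflict is hereditary (γ # γ' ≤ γ'' implies γ # γ''). -/

import Mathlib

structure Comm (P L : Type) where
  sender : P
  receiver : P
  label : L

def play {P L : Type} (α : Comm P L) : Set P := {α.sender, α.receiver}

abbrev Trace (P L : Type) := List (Comm P L)

def playT {P L : Type} : Trace P L → Set P
  | [] => ∅
  | α :: σ => play α ∪ playT σ

/-- Permutation equivalence: least equivalence relation swapping adjacent
communications with disjoint participant sets. -/
inductive PermEq {P L : Type} : Trace P L → Trace P L → Prop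
  | swap (σ σ' : Trace P L) (α α' : Comm P L) (h : play α ∩ play α' = ∅) :
      PermEq (σ ++ α :: α' :: σ') (σ ++ α' :: α :: σ')
  | refl (σ : Trace P L) : PermEq σ σ
  | symm {σ σ' : Trace P L} : PermEq σ σ' → PermEq σ' σ
  | trans {σ σ' σ'' : Trace P L} : PermEq σ σ' → PermEq σ' σ'' → PermEq σ σ''

/-- A non-empty trace is pointed if every communication except the last shares
a participant with some later communication in the trace. -/
def IsPointed {P L : Type} (σ : Trace P L) : Prop :=
  σ ≠ [] ∧ ∀ i (hi : i + 1 < σ.length),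
    ∃ j, i < j ∧ ∃ hj : j < σ.length,
      (play (σ.get ⟨i, by omega⟩) ∩ play (σ.get ⟨j, hj⟩)).Nonempty

instance permSetoid (P L : Type) : Setoid (Trace P L) :=
  ⟨PermEq, ⟨PermEq.refl, PermEq.symm, PermEq.trans⟩⟩

/-- G-events live in the quotient of traces by permutation equivalence. -/
abbrev GEvent (P L : Type) := Quotient (permSetoid P L)

/-- A g-event proper is the class of a pointed trace. -/
def IsGEvent {P L : Type} (γ : GEvent P L) : Prop :=
  ∃ σ : Trace P L, IsPointed σ ∧ γ = ⟦σ⟧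

open Classical in
/-- Causal prefixing on traces: prepend `α` iff its participants meet those of `σ`. -/
noncomputable def cpre {P L : Type} (α : Comm P L) (σ : Trace P L) : Trace P L :=
  if (play α ∩ playT σ).Nonempty then α :: σ else σ

/-- `evFull σ` is (a canonical representative of) the g-event generated by `σ`. -/
noncomputable def evFull {P L : Type} : Trace P L → Trace P L
  | [] => []
  | [α] => [α]
  | α :: β :: σ => cpre α (evFull (β :: σ))

lemma playT_append {P L : Type} (σ τ : Trace P L) :
    playT (σ ++ τ) = playT σ ∪ playT τ := by
  induction σ with
  | nil => simp [playT]
  | cons α σ ih => simp [playT, ih, Set.union_assoc]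

lemma PermEq.playT_eq {P L : Type} {σ σ' : Trace P L} (h : PermEq σ σ') :
    playT σ = playT σ' := by
  induction h with
  | swap σ σ' α α' h =>
      simp [playT_append, playT, Set.union_left_comm, Set.union_comm, Set.union_assoc]
  | refl => rfl
  | symm _ ih => exact ih.symm
  | trans _ _ ih1 ih2 => exact ih1.trans ih2

lemma PermEq.cons {P L : Type} {σ σ' : Trace P L} (α : Comm P L) (h : PermEq σ σ') :
    PermEq (α :: σ) (α :: σ') := by
  induction h with
  | swap τ τ' β β' hd => exact PermEq.swap (α :: τ) τ' β β' hd
  | refl => exact PermEq.refl _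
  | symm _ ih => exact ih.symm
  | trans _ _ ih1 ih2 => exact ih1.trans ih2

/-- Causal prefixing of a g-event by a communication. -/
noncomputable def cprefix {P L : Type} (α : Comm P L) : GEvent P L → GEvent P L :=
  Quotient.map (cpre α) (by
    intro σ σ' h
    by_cases hc : (play α ∩ playT σ').Nonempty
    · simpa [cpre, h.playT_eq, hc] using (show α :: σ ≈ α :: σ' from PermEq.cons α h)
    · simpa [cpre, h.playT_eq, hc] using h)

/-- Causal prefixing of a g-event by a trace. -/
noncomputable def cprefixT {P L : Type} : Trace P L → GEvent P L → GEvent P L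
  | [], γ => γ
  | α :: σ, γ => cprefix α (cprefixT σ γ)

/-- Causality on g-events. -/
def GCause {P L : Type} (γ γ' : GEvent P L) : Prop :=
  ∃ σ σ' : Trace P L, γ = ⟦σ⟧ ∧ γ' = ⟦σ ++ σ'⟧

/-- Conflict on g-events. -/
def GConflict {P L : Type} (γ γ' : GEvent P L) : Prop :=
  ∃ (σ σ₁ σ₂ : Trace P L) (p q : P) (l₁ l₂ : L), l₁ ≠ l₂ ∧
    γ = ⟦σ ++ ⟨p, q, l₁⟩ :: σ₁⟧ ∧ γ' = ⟦σ ++ ⟨p, q, l₂⟩ :: σ₂⟧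

/-- Global types: `p→q:{λᵢ;Gᵢ}` or `End`. -/
inductive GlobalType (P L : Type) where
  | done : GlobalType P L
  | comm (p q : P) (branches : List (L × GlobalType P L)) : GlobalType P L

/-- Traces of a global type: sequences of decorations on a path from the root. -/
inductive TrOf {P L : Type} : GlobalType P L → Trace P L → Prop
  | single {p q : P} {bs : List (L × GlobalType P L)} {l : L} {G' : GlobalType P L}
      (h : (l, G') ∈ bs) : TrOf (.comm p q bs) [⟨p, q, l⟩]
  | cons {p q : P} {bs : List (L × GlobalType P L)} {l : L} {G' : GlobalType P L}
      {σ : Trace P L} (h : (l, G') ∈ bs) (ht : TrOf G' σ) :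
      TrOf (.comm p q bs) (⟨p, q, l⟩ :: σ)

/-- The events of a global type: E(G) = { ev(σ) | σ ∈ Tr⁺(G) }. -/
def EG {P L : Type} (G : GlobalType P L) : Set (GEvent P L) :=
  {γ | ∃ σ : Trace P L, TrOf G σ ∧ γ = ⟦evFull σ⟧}

/-! Permutation equivalence only swaps adjacent communications with disjoint participants, so it
preserves the length of a trace and, for each participant `p`, the subsequence of communications
in which `p` takes part. The first fact makes causality antisymmetric; the second makes conflict
irreflexive, since the `p`-projections of `σ ++ ⟨p, q, l₁⟩ :: σ₁` and `σ ++ ⟨p, q, l₂⟩ :: σ₂`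
differ right after that of `σ`. -/

namespace PermEq

variable {P L : Type} {σ σ' : Trace P L}

lemma length_eq (h : PermEq σ σ') : σ.length = σ'.length := by
  induction h with
  | swap => simp
  | refl => rfl
  | symm _ ih => exact ih.symm
  | trans _ _ ih₁ ih₂ => exact ih₁.trans ih₂

lemma append_right (υ : Trace P L) (h : PermEq σ σ') : PermEq (σ ++ υ) (σ' ++ υ) := by
  induction h with
  | swap τ τ' α α' hd => simpa using PermEq.swap τ (τ' ++ υ) α α' hd
  | refl => exact PermEq.refl _
  | symm _ ih => exact ih.symm
  | trans _ _ ih₁ ih₂ => exact ih₁.trans ih₂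

lemma filter_eq (f : Comm P L → Bool)
    (hf : ∀ α α', play α ∩ play α' = ∅ → f α → f α' → False)
    (h : PermEq σ σ') : σ.filter f = σ'.filter f := by
  induction h with
  | swap τ τ' α α' hd =>
      simp only [List.filter_append, List.filter_cons]
      cases hα : f α <;> cases hα' : f α' <;> simp
      exact (hf α α' hd hα hα').elim
  | refl => rfl
  | symm _ ih => exact ih.symm
  | trans _ _ ih₁ ih₂ => exact ih₁.trans ih₂

open Classical in
lemma filter_participant_eq (p : P) (h : PermEq σ σ') :
    σ.filter (fun α => p ∈ play α) = σ'.filter (fun α => p ∈ play α) :=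
  h.filter_eq _ fun _ _ hd hα hα' =>
    Set.eq_empty_iff_forall_notMem.mp hd p ⟨of_decide_eq_true hα, of_decide_eq_true hα'⟩

end PermEq

section GEvent

variable {P L : Type}

lemma GEvent.mk_append_eq {σ τ : Trace P L} (h : (⟦σ⟧ : GEvent P L) = ⟦τ⟧) (υ : Trace P L) :
    (⟦σ ++ υ⟧ : GEvent P L) = ⟦τ ++ υ⟧ :=
  Quotient.sound ((Quotient.exact h : PermEq σ τ).append_right υ)

lemma GCause.refl (γ : GEvent P L) : GCause γ γ :=
  ⟨γ.out, [], γ.out_eq.symm, by simp⟩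

lemma GCause.trans {γ γ' γ'' : GEvent P L} :
    GCause γ γ' → GCause γ' γ'' → GCause γ γ'' := by
  rintro ⟨σ, σ', rfl, rfl⟩ ⟨τ, τ', hτ, rfl⟩
  exact ⟨σ, σ' ++ τ', rfl, by rw [← List.append_assoc, GEvent.mk_append_eq hτ]⟩

lemma GCause.antisymm {γ γ' : GEvent P L} : GCause γ γ' → GCause γ' γ → γ = γ' := by
  rintro ⟨σ, σ', rfl, rfl⟩ ⟨τ, τ', hτ, hσ⟩
  have hl₁ := (Quotient.exact hτ : PermEq (σ ++ σ') τ).length_eq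
  have hl₂ := (Quotient.exact hσ : PermEq σ (τ ++ τ')).length_eq
  simp only [List.length_append] at hl₁ hl₂
  rw [List.eq_nil_of_length_eq_zero (by omega : σ'.length = 0), List.append_nil]

lemma GConflict.irrefl (γ : GEvent P L) : ¬ GConflict γ γ := by
  classical
  rintro ⟨σ, σ₁, σ₂, p, q, l₁, l₂, hne, rfl, h⟩
  have hp := (Quotient.exact h : PermEq _ _).filter_participant_eq p
  simp only [List.filter_append, List.filter_cons, play, Set.mem_insert_iff, true_or,
    decide_true, if_true, List.append_cancel_left_eq, List.cons.injEq, Comm.mk.injEq] at hp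
  exact hne hp.1.2.2

lemma GConflict.symm {γ γ' : GEvent P L} : GConflict γ γ' → GConflict γ' γ := by
  rintro ⟨σ, σ₁, σ₂, p, q, l₁, l₂, hne, h₁, h₂⟩
  exact ⟨σ, σ₂, σ₁, p, q, l₂, l₁, hne.symm, h₂, h₁⟩

lemma GConflict.trans_gCause {γ γ' γ'' : GEvent P L} :
    GConflict γ γ' → GCause γ' γ'' → GConflict γ γ'' := by
  rintro ⟨σ, σ₁, σ₂, p, q, l₁, l₂, hne, h₁, rfl⟩ ⟨τ, τ', hτ, rfl⟩
  refine ⟨σ, σ₁, σ₂ ++ τ', p, q, l₁, l₂, hne, h₁, ?_⟩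
  simpa using (GEvent.mk_append_eq hτ τ').symm

end GEvent

/-- for every global type G, ES(G) = (E(G), ≤_G, #_G) is a Prime
Event Structure: causality is a partial order, conflict is irreflexive and
symmetric, and conflict is hereditary. -/
theorem ESG_is_PES {P L : Type} (G : GlobalType P L) :
    (∀ γ ∈ EG G, GCause γ γ) ∧
    (∀ γ γ' γ'', γ ∈ EG G → γ' ∈ EG G → γ'' ∈ EG G →
      GCause γ γ' → GCause γ' γ'' → GCause γ γ'') ∧
    (∀ γ γ', γ ∈ EG G → γ' ∈ EG G → GCause γ γ' → GCause γ' γ → γ = γ') ∧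
    (∀ γ ∈ EG G, ¬ GConflict γ γ) ∧
    (∀ γ γ', γ ∈ EG G → γ' ∈ EG G → GConflict γ γ' → GConflict γ' γ) ∧
    (∀ γ γ' γ'', γ ∈ EG G → γ' ∈ EG G → γ'' ∈ EG G →
      GConflict γ γ' → GCause γ' γ'' → GConflict γ γ'') :=
  ⟨fun γ _ => GCause.refl γ,
    fun _ _ _ _ _ _ => GCause.trans,
    fun _ _ _ _ => GCause.antisymm,
    fun γ _ => GConflict.irrefl γ,
    fun _ _ _ _ => GConflict.symm,
    fun _ _ _ _ _ _ => GConflict.trans_gCause⟩
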